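/- Let F be a differential field of characteristic zero and let E = F(ζ₁,…,ζ_t) be an antiderivative extension of F. Then the fixed field E^{G(E|F)} = {y ∈ E : σ(y) = y for all σ ∈ G(E|F)} equals F. -/

import Mathlib

/-- A derivation on a field: an additive map satisfying the Leibniz rule. -/
def IsDeriv {E : Type*} [Field E] (D : E → E) : Prop :=
  (∀ x y : E, D (x + y) = D x + D y) ∧ ∀ x y : E, D (x * y) = D x * y + x * D y

/-- A subfield closed under the derivation, i.e. a differential subfield. -/
def IsDiffSubfield {E : Type*} [Field E] (D : E → E) (K : Subfield E) : Prop :=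
  ∀ x ∈ K, D x ∈ K

/-- The subfield generated by a subfield `F` together with a set `S`, i.e. `F(S)`. -/
def adjoinSF {E : Type*} [Field E] (F : Subfield E) (S : Set E) : Subfield E :=
  Subfield.closure (↑F ∪ S)

/-- `ζ 0, …, ζ (n-1)` are iterated antiderivatives of `F`:
`(ζ i)' ∈ F(ζ 0, …, ζ (i-1))` for every `i`. -/
def IsIterAntideriv {E : Type*} [Field E] (D : E → E) (F : Subfield E) {n : ℕ}
    (ζ : Fin n → E) : Prop :=
  ∀ i, D (ζ i) ∈ adjoinSF F (ζ '' {j | j < i})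

/-- `M` is a no new constants extension of `K`: the constants of `M` are exactly
the constants of `K`. -/
def NoNewConstants {E : Type*} [Field E] (D : E → E) (K M : Subfield E) : Prop :=
  K ≤ M ∧ ∀ x ∈ M, D x = 0 → x ∈ K

/-- `K` is an iterated antiderivative extension of `F`. -/
def IsIAE {E : Type*} [Field E] (D : E → E) (F K : Subfield E) : Prop :=
  NoNewConstants D F K ∧
    ∃ (n : ℕ) (ζ : Fin n → E), IsIterAntideriv D F ζ ∧ K = adjoinSF F (Set.range ζ)

/-- `K` is an antiderivative extension of `F`. -/
def IsAE {E : Type*} [Field E] (D : E → E) (F K : Subfield E) : Prop :=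
  NoNewConstants D F K ∧
    ∃ (n : ℕ) (ζ : Fin n → E), (∀ i, D (ζ i) ∈ (F : Set E)) ∧ K = adjoinSF F (Set.range ζ)

/-- A differential automorphism of `E` over `F`: a field automorphism fixing `F`
pointwise and commuting with the derivation. -/
def IsDiffAut {E : Type*} [Field E] (D : E → E) (F : Subfield E) (σ : E ≃+* E) : Prop :=
  (∀ x ∈ F, σ x = x) ∧ ∀ y : E, σ (D y) = D (σ y)

/-- `M` is a minimal differential field extension of `K`. -/
def IsMinimalDiffExt {E : Type*} [Field E] (D : E → E) (K M : Subfield E) : Prop :=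
  IsDiffSubfield D M ∧ K < M ∧
    ∀ L : Subfield E, IsDiffSubfield D L → K ≤ L → L ≤ M → L = K ∨ L = M

/-- The field of constants of a differential subfield `F`. -/
def constantsOf {E : Type*} [Field E] (D : E → E) (hD : IsDeriv D) (F : Subfield E) :
    Subfield E where
  carrier := {x : E | x ∈ F ∧ D x = 0}
  zero_mem' := by
    refine ⟨F.zero_mem, ?_⟩
    have h := hD.1 0 0
    simp only [add_zero] at h
    exact left_eq_add.mp h
  one_mem' := by
    refine ⟨F.one_mem, ?_⟩
    have h := hD.2 1 1
    simp only [mul_one, one_mul] at h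
    exact left_eq_add.mp h
  add_mem' := by
    rintro a b ⟨haF, ha⟩ ⟨hbF, hb⟩
    exact ⟨F.add_mem haF hbF, by rw [hD.1 a b, ha, hb, add_zero]⟩
  mul_mem' := by
    rintro a b ⟨haF, ha⟩ ⟨hbF, hb⟩
    exact ⟨F.mul_mem haF hbF, by rw [hD.2 a b, ha, hb, zero_mul, mul_zero, add_zero]⟩
  neg_mem' := by
    rintro a ⟨haF, ha⟩
    refine ⟨F.neg_mem haF, ?_⟩
    have h0 : D 0 = 0 := by
      have h := hD.1 0 0
      simp only [add_zero] at h
      exact left_eq_add.mp h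
    have h := hD.1 a (-a)
    rw [add_neg_cancel, h0, ha, zero_add] at h
    exact h.symm
  inv_mem' := by
    rintro a ⟨haF, ha⟩
    refine ⟨F.inv_mem haF, ?_⟩
    by_cases h0 : a = 0
    · subst h0; rw [inv_zero]; exact ha
    · have h1 : D 1 = 0 := by
        have h := hD.2 1 1
        simp only [mul_one, one_mul] at h
        exact left_eq_add.mp h
      have h := hD.2 a a⁻¹
      rw [mul_inv_cancel₀ h0, h1, ha, zero_mul, zero_add] at h
      rcases mul_eq_zero.mp h.symm with h' | h'
      · exact absurd h' h0
      · exact h'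

/-- The antiderivative closure of `L` in `E`: the subfield generated over `L`
by all antiderivatives of `L` lying in `E`. -/
def adCl {E : Type*} [Field E] (D : E → E) (L : Subfield E) : Subfield E :=
  adjoinSF L {x : E | D x ∈ L}

/-- The differential subfield generated by `F` and `u`, i.e. `F⟨u⟩ = F(u, u', u'', …)`. -/
def diffAdjoin {E : Type*} [Field E] (D : E → E) (F : Subfield E) (u : E) : Subfield E :=
  sInf {M : Subfield E | IsDiffSubfield D M ∧ F ≤ M ∧ u ∈ M}

/-- The transcendence degree of `K` over `F` (both viewed inside an ambient field `E`):
the supremum of cardinalities of subsets of `K` that are algebraically independent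
over `F`. -/
noncomputable def trdegSF {E : Type*} [Field E] (F K : Subfield E) : Cardinal :=
  ⨆ s : {s : Set E // s ⊆ (K : Set E) ∧ AlgebraicIndependent F ((↑) : s → E)},
    Cardinal.mk s.1

/-!
Since every generator `ζ i` has its derivative in `F`, Ostrowski's lemma (an antiderivative of a
differential field `L` that is algebraic over `L` lies in `L`, when there are no new constants)
shows that a transcendence basis `u` chosen among the `ζ i` already generates `E`. So `E = F(u)`
is a rational function field with `u j′ ∈ F`, and for `m ∈ ℕ^u` the substitution `u ↦ u + m` is a
differential automorphism, because it commutes with the derivation on the generators. An element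
fixed by all of them is a quotient `P / Q` with `P(u) Q(u + m) = Q(u) P(u + m)` for every `m`;
evaluating at a point `v` with `Q(v) ≠ 0` shows that `P - (P(v) / Q(v)) Q` vanishes on the grid
`v + ℕ^u`, hence is zero, so `P / Q` is an element of `F`.
-/

open scoped Differential

open Polynomial in
theorem mem_range_of_isAlgebraic_of_deriv_mem_range {L K : Type*} [Field L] [CharZero L]
    [Field K] [Algebra L K] [Differential L] [Differential K] [DifferentialAlgebra L K]
    [Differential.ContainConstants L K] {z : K} (hz : z′ ∈ (algebraMap L K).range)
    (halg : IsAlgebraic L z) : z ∈ (algebraMap L K).range := by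
  obtain ⟨b, hb⟩ := hz
  set p := minpoly L z
  set n := p.natDegree
  have hint : IsIntegral L z := halg.isIntegral
  have hmonic : p.Monic := minpoly.monic hint
  have hn : 0 < n := minpoly.natDegree_pos hint
  -- differentiating `p(z) = 0` gives a relation of lower degree, which must be trivial
  set q := Differential.mapCoeffs p + C b * derivative p
  have hqz : aeval z q = 0 := by
    have h := Differential.deriv_aeval_eq z p
    rw [minpoly.aeval, map_zero, ← hb] at h
    simp [q, h, mul_comm]
  have hq : q = 0 := by
    by_contra hq0
    refine (minpoly.degree_le_of_ne_zero L z hq0 hqz).not_gt ?_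
    rw [degree_eq_natDegree (minpoly.ne_zero hint), degree_lt_iff_coeff_zero]
    intro m hm
    have hderiv : (p.coeff m)′ = 0 := by
      rcases hm.eq_or_lt with rfl | hlt
      · rw [Monic.coeff_natDegree hmonic, Derivation.map_one_eq_zero]
      · rw [coeff_eq_zero_of_natDegree_lt hlt, map_zero]
    have hnext : p.coeff (m + 1) = 0 := coeff_eq_zero_of_natDegree_lt (Nat.lt_succ_of_le hm)
    simp [q, coeff_derivative, hderiv, hnext]
  have hcoeff : (p.coeff (n - 1))′ + b * n = 0 := by
    have h := congrArg (coeff · (n - 1)) hq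
    simp only [q, coeff_add, coeff_C_mul, coeff_derivative, Differential.coeff_mapCoeffs,
      coeff_zero] at h
    rwa [Nat.sub_add_cancel hn, Monic.coeff_natDegree hmonic, one_mul,
      ← Nat.cast_add_one, Nat.sub_add_cancel hn] at h
  have hconst : (z + algebraMap L K (p.coeff (n - 1) / n))′ = 0 := by
    rw [map_add, ← algebraMap.coe_deriv, ← hb, ← map_add,
      Derivation.leibniz_div_const _ _ _ (Derivation.map_natCast _ n), smul_eq_mul,
      ← map_zero (algebraMap L K)]
    have hn0 : (n : L) ≠ 0 := Nat.cast_ne_zero.mpr hn.ne'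
    congr 1
    field_simp
    linear_combination hcoeff
  obtain ⟨c, hc⟩ := mem_range_of_deriv_eq_zero L hconst
  exact ⟨c - p.coeff (n - 1) / n, by rw [map_sub, hc, add_sub_cancel_right]⟩

namespace IsDeriv

variable {E : Type*} [Field E] {D : E → E}

def toDerivation (hD : IsDeriv D) : Derivation ℤ E E :=
  Derivation.mk' (AddMonoidHom.mk' D hD.1).toIntLinearMap fun x y => by
    simp [hD.2 x y, smul_eq_mul, mul_comm, add_comm]

@[simp]
theorem toDerivation_apply (hD : IsDeriv D) (x : E) : hD.toDerivation x = D x := rfl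

def restrict (hD : IsDeriv D) {L : Subfield E} (hL : IsDiffSubfield D L) : Derivation ℤ L L :=
  Derivation.mk' (AddMonoidHom.mk' (fun a : L => (⟨D a, hL a a.2⟩ : L)) fun a b =>
      Subtype.ext (hD.1 a b)).toIntLinearMap fun a b =>
    Subtype.ext (by simp [hD.2, smul_eq_mul, mul_comm, add_comm])

theorem sub (hD : IsDeriv D) {D' : E → E} (hD' : IsDeriv D') : IsDeriv fun z => D z - D' z :=
  ⟨fun x y => by simp only [hD.1, hD'.1]; ring, fun x y => by simp only [hD.2, hD'.2]; ring⟩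

theorem conj (hD : IsDeriv D) (σ : E ≃+* E) : IsDeriv fun z => σ.symm (D (σ z)) :=
  ⟨fun x y => by simp only [map_add, hD.1], fun x y => by simp only [map_mul, hD.2, map_add,
    RingEquiv.symm_apply_apply]⟩

theorem eqOn_closure (hD : IsDeriv D) {D' : E → E} (hD' : IsDeriv D') {s : Set E}
    (h : s.EqOn D D') : (Subfield.closure s : Set E).EqOn D D' := by
  have hle : Subfield.closure s ≤ constantsOf _ (hD.sub hD') ⊤ :=
    Subfield.closure_le.mpr fun x hx => ⟨trivial, sub_eq_zero.mpr (h hx)⟩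
  exact fun x hx => sub_eq_zero.mp (hle hx).2

theorem mem_of_isAlgebraic [CharZero E] (hD : IsDeriv D) {L : Subfield E}
    (hL : IsDiffSubfield D L) (hconst : ∀ x, D x = 0 → x ∈ L) {z : E} (hz : D z ∈ L)
    (halg : IsAlgebraic L z) : z ∈ L := by
  let : Differential E := ⟨hD.toDerivation⟩
  let : Differential L := ⟨hD.restrict hL⟩
  have : DifferentialAlgebra L E := ⟨fun _ => rfl⟩
  have : Differential.ContainConstants L E := ⟨fun {x} h => ⟨⟨x, hconst x h⟩, rfl⟩⟩
  obtain ⟨w, hw⟩ := mem_range_of_isAlgebraic_of_deriv_mem_range (z := z) ⟨⟨D z, hz⟩, rfl⟩ halg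
  exact hw ▸ w.2

end IsDeriv

theorem adjoinSF_eq_toSubfield_adjoin {E : Type*} [Field E] (F : Subfield E) (S : Set E) :
    adjoinSF F S = (IntermediateField.adjoin F S).toSubfield := by
  rw [IntermediateField.adjoin_toSubfield, adjoinSF]
  congr
  exact Subtype.range_coe.symm

theorem isDiffSubfield_adjoinSF {E : Type*} [Field E] {D : E → E} (hD : IsDeriv D)
    {F : Subfield E} (hF : IsDiffSubfield D F) {S : Set E} (hS : ∀ s ∈ S, D s ∈ adjoinSF F S) :
    IsDiffSubfield D (adjoinSF F S) := by
  have hsub : (F : Set E) ⊆ adjoinSF F S := fun x hx => Subfield.subset_closure (Or.inl hx)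
  intro z hz
  induction hz using Subfield.closure_induction with
  | mem x hx => exact hx.elim (fun hx => hsub (hF x hx)) (hS x)
  | one => simp [← hD.toDerivation_apply]
  | add x y _ _ hx hy => rw [hD.1]; exact add_mem hx hy
  | neg x _ hx => rw [← hD.toDerivation_apply, map_neg]; exact neg_mem hx
  | inv x hx' hx =>
    rw [← hD.toDerivation_apply, Derivation.leibniz_inv, smul_eq_mul]
    exact mul_mem (neg_mem (pow_mem (inv_mem hx') 2)) hx
  | mul x y hx' hy' hx hy => rw [hD.2]; exact add_mem (mul_mem hx hy') (mul_mem hx' hy)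

theorem isDiffAut_of_map_deriv_eq {E : Type*} [Field E] {D : E → E} (hD : IsDeriv D)
    {F : Subfield E} (hF : IsDiffSubfield D F) {σ : E ≃+* E} (hσF : ∀ x ∈ F, σ x = x)
    {S : Set E} (htop : adjoinSF F S = ⊤) (hS : ∀ s ∈ S, σ (D s) = D (σ s)) :
    IsDiffAut D F σ := by
  refine ⟨hσF, fun y => ?_⟩
  have hgen : (↑F ∪ S : Set E).EqOn D fun z => σ.symm (D (σ z)) := by
    rintro z (hz | hz) <;> dsimp only
    · rw [hσF z hz, eq_comm, RingEquiv.symm_apply_eq, hσF _ (hF z hz)]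
    · rw [← hS z hz, RingEquiv.symm_apply_apply]
  have hy : y ∈ adjoinSF F S := htop ▸ Subfield.mem_top y
  rw [hD.eqOn_closure (hD.conj σ) hgen hy, RingEquiv.apply_symm_apply]

theorem exists_algebraicIndependent_subset_adjoin_eq_top {E : Type*} [Field E] [CharZero E]
    {D : E → E} (hD : IsDeriv D) {F : Subfield E} (hF : IsDiffSubfield D F)
    (hNNC : ∀ x : E, D x = 0 → x ∈ F) {S : Set E} (hS : ∀ s ∈ S, D s ∈ F)
    (htop : IntermediateField.adjoin F S = ⊤) :
    ∃ u ⊆ S, AlgebraicIndependent F ((↑) : u → E) ∧ IntermediateField.adjoin F u = ⊤ := by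
  have : Algebra.IsAlgebraic (Algebra.adjoin F S) E := by
    rw [← IntermediateField.isAlgebraic_adjoin_iff_top, htop, Algebra.isAlgebraic_iff_isIntegral]
    exact Algebra.isIntegral_of_surjective IntermediateField.topEquiv.surjective
  obtain ⟨u, huS, hu⟩ := exists_isTranscendenceBasis_subset (R := F) S
  refine ⟨u, huS, hu.1, ?_⟩
  set K := IntermediateField.adjoin F u
  have halg : Algebra.IsAlgebraic K E := by
    have := hu.isAlgebraic_field
    rwa [Subtype.range_coe] at this
  have hFK : ∀ x ∈ F, x ∈ K := fun x hx => K.algebraMap_mem ⟨x, hx⟩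
  have hK : IsDiffSubfield D K.toSubfield := by
    rw [← adjoinSF_eq_toSubfield_adjoin]
    exact isDiffSubfield_adjoinSF hD hF fun s hs =>
      Subfield.subset_closure (Or.inl (hS s (huS hs)))
  have hSK : S ⊆ K := fun s hs =>
    hD.mem_of_isAlgebraic hK (fun x hx => hFK x (hNNC x hx)) (hFK _ (hS s hs))
      (halg.isAlgebraic s)
  rw [eq_top_iff, ← htop, IntermediateField.adjoin_le_iff]
  exact hSK

namespace MvPolynomial

variable {σ R K : Type*} [CommRing R] [Field K]

noncomputable def shiftEquiv (c : σ → R) : MvPolynomial σ R ≃ₐ[R] MvPolynomial σ R :=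
  AlgEquiv.ofAlgHom (aeval fun i => X i + C (c i)) (aeval fun i => X i - C (c i))
    (algHom_ext fun i => by simp) (algHom_ext fun i => by simp)

@[simp]
theorem shiftEquiv_X (c : σ → R) (i : σ) : shiftEquiv c (X i) = X i + C (c i) := by
  simp [shiftEquiv]

@[simp]
theorem eval_shiftEquiv (c v : σ → R) (p : MvPolynomial σ R) :
    eval v (shiftEquiv c p) = eval (v + c) p := by
  induction p using MvPolynomial.induction_on with
  | C a => simp [shiftEquiv]
  | add p q hp hq => simp [hp, hq]
  | mul_X p i hp => simp [hp]

theorem exists_eq_C_mul_of_mul_shiftEquiv_eq [CharZero K] {p q : MvPolynomial σ K} (hq : q ≠ 0)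
    (h : ∀ m : σ → ℕ,
      p * shiftEquiv (fun i => (m i : K)) q = q * shiftEquiv (fun i => (m i : K)) p) :
    ∃ c, p = C c * q := by
  obtain ⟨v, hv⟩ : ∃ v, eval v q ≠ 0 := by
    by_contra! hv
    exact hq (funext fun v => by simp [hv v])
  refine ⟨eval v p / eval v q, sub_eq_zero.mp ?_⟩
  -- `p / q` takes the same value at `v` and on the grid `v + ℕ^σ`
  refine funext_set (fun i => Set.range fun n : ℕ => v i + n)
    (fun i => Set.infinite_range_of_injective fun a b hab => by simpa using hab) fun w hw => ?_
  choose m hm using fun i => hw i trivial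
  obtain rfl : w = v + fun i => (m i : K) := by ext i; simp [hm]
  have hvm := congrArg (eval v) (h m)
  simp only [map_mul, eval_shiftEquiv] at hvm
  simp only [map_sub, map_mul, eval_C, map_zero]
  rw [sub_eq_zero, div_mul_eq_mul_div, eq_div_iff hv]
  linear_combination -hvm

theorem mem_range_of_forall_shift_eq [CharZero K] {f : FractionRing (MvPolynomial σ K)}
    (hf : ∀ m : σ → ℕ,
      IsFractionRing.algEquivOfAlgEquiv (shiftEquiv fun i => (m i : K)) f = f) :
    f ∈ (algebraMap K (FractionRing (MvPolynomial σ K))).range := by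
  obtain ⟨p, q, hq, rfl⟩ := IsFractionRing.div_surjective (A := MvPolynomial σ K) f
  have hq0 : q ≠ 0 := nonZeroDivisors.ne_zero hq
  have hqK : algebraMap _ (FractionRing (MvPolynomial σ K)) q ≠ 0 :=
    IsFractionRing.to_map_ne_zero_of_mem_nonZeroDivisors hq
  obtain ⟨c, hc⟩ := exists_eq_C_mul_of_mul_shiftEquiv_eq (p := p) hq0 fun m => by
    have h := hf m
    rw [map_div₀, IsFractionRing.algEquivOfAlgEquiv_algebraMap,
      IsFractionRing.algEquivOfAlgEquiv_algebraMap,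
      div_eq_div_iff (by simpa using hq0) hqK] at h
    apply IsFractionRing.injective (MvPolynomial σ K) (FractionRing (MvPolynomial σ K))
    rw [map_mul, map_mul, ← h, mul_comm]
  refine ⟨c, ?_⟩
  rw [hc, map_mul, mul_div_cancel_right₀ _ hqK, ← algebraMap_eq,
    ← IsScalarTower.algebraMap_apply]

end MvPolynomial

namespace AlgebraicIndependent

open MvPolynomial

variable {E : Type*} [Field E] {F : Subfield E} {ι : Type*} {x : ι → E}

noncomputable def aevalEquivFieldOfAdjoinEqTop (hx : AlgebraicIndependent F x)
    (htop : IntermediateField.adjoin F (Set.range x) = ⊤) :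
    FractionRing (MvPolynomial ι F) ≃ₐ[F] E :=
  hx.aevalEquivField.trans ((IntermediateField.equivOfEq htop).trans IntermediateField.topEquiv)

@[simp]
theorem aevalEquivFieldOfAdjoinEqTop_algebraMap (hx : AlgebraicIndependent F x)
    (htop : IntermediateField.adjoin F (Set.range x) = ⊤) (P : MvPolynomial ι F) :
    hx.aevalEquivFieldOfAdjoinEqTop htop (algebraMap _ _ P) = aeval x P := by
  simp [aevalEquivFieldOfAdjoinEqTop]

noncomputable def shiftAut (hx : AlgebraicIndependent F x)
    (htop : IntermediateField.adjoin F (Set.range x) = ⊤) (c : ι → F) : E ≃ₐ[F] E :=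
  (hx.aevalEquivFieldOfAdjoinEqTop htop).autCongr
    (IsFractionRing.algEquivOfAlgEquiv (shiftEquiv c))

theorem shiftAut_apply_self (hx : AlgebraicIndependent F x)
    (htop : IntermediateField.adjoin F (Set.range x) = ⊤) (c : ι → F) (i : ι) :
    hx.shiftAut htop c (x i) = x i + c i := by
  have hxi : x i = hx.aevalEquivFieldOfAdjoinEqTop htop (algebraMap _ _ (X i : MvPolynomial ι F)) :=
    by simp
  conv_lhs => rw [hxi]
  rw [shiftAut, AlgEquiv.autCongr_apply, AlgEquiv.trans_apply, AlgEquiv.trans_apply,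
    AlgEquiv.symm_apply_apply, IsFractionRing.algEquivOfAlgEquiv_algebraMap, shiftEquiv_X,
    aevalEquivFieldOfAdjoinEqTop_algebraMap, map_add, aeval_X, aeval_C]
  rfl

theorem isDiffAut_shiftAut (hx : AlgebraicIndependent F x)
    (htop : IntermediateField.adjoin F (Set.range x) = ⊤) {D : E → E} (hD : IsDeriv D)
    (hF : IsDiffSubfield D F) (hxF : ∀ i, D (x i) ∈ F) {c : ι → F} (hc : ∀ i, D (c i) = 0) :
    IsDiffAut D F (hx.shiftAut htop c).toRingEquiv := by
  have htop' : adjoinSF F (Set.range x) = ⊤ := by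
    rw [adjoinSF_eq_toSubfield_adjoin, htop, IntermediateField.top_toSubfield]
  refine isDiffAut_of_map_deriv_eq hD hF (fun z hz => (hx.shiftAut htop c).commutes ⟨z, hz⟩)
    htop' ?_
  rintro _ ⟨i, rfl⟩
  have hfix : hx.shiftAut htop c (D (x i)) = D (x i) :=
    (hx.shiftAut htop c).commutes ⟨_, hxF i⟩
  simp only [AlgEquiv.coe_ringEquiv]
  rw [hfix, shiftAut_apply_self, hD.1, hc, add_zero]

theorem mem_of_forall_isDiffAut_apply_eq [CharZero E] (hx : AlgebraicIndependent F x)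
    (htop : IntermediateField.adjoin F (Set.range x) = ⊤) {D : E → E} (hD : IsDeriv D)
    (hF : IsDiffSubfield D F) (hxF : ∀ i, D (x i) ∈ F) {y : E}
    (hy : ∀ σ : E ≃+* E, IsDiffAut D F σ → σ y = y) : y ∈ F := by
  set e := hx.aevalEquivFieldOfAdjoinEqTop htop
  have hfix (m : ι → ℕ) :
      IsFractionRing.algEquivOfAlgEquiv (shiftEquiv fun i => (m i : F)) (e.symm y) = e.symm y := by
    have hm : ∀ i, D ((m i : F) : E) = 0 := fun i => by
      push_cast
      exact hD.toDerivation.map_natCast (m i)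
    apply e.injective
    rw [e.apply_symm_apply]
    exact hy _ (hx.isDiffAut_shiftAut htop hD hF hxF hm)
  obtain ⟨k, hk⟩ := MvPolynomial.mem_range_of_forall_shift_eq hfix
  have hyk : y = k := by
    rw [← e.apply_symm_apply y, ← hk, AlgEquiv.commutes]
    rfl
  exact hyk ▸ k.2

end AlgebraicIndependent

/-- for an antiderivative extension `E = F(ζ₁,…,ζ_t)` (the ambient
field, `⊤`) of `F`, the fixed field of `G(E|F)` is exactly `F`. -/
theorem statement10 {E : Type*} [Field E] [CharZero E] (D : E → E) (hD : IsDeriv D)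
    (F : Subfield E) (hF : IsDiffSubfield D F)
    (hNNC : ∀ x : E, D x = 0 → x ∈ F)  -- E is a no new constants extension of F
    (t : ℕ) (ζ : Fin t → E) (hζ : ∀ i, D (ζ i) ∈ F)
    (htop : adjoinSF F (Set.range ζ) = ⊤) :
    {y : E | ∀ σ : E ≃+* E, IsDiffAut D F σ → σ y = y} = (F : Set E) := by
  have htop' : IntermediateField.adjoin F (Set.range ζ) = ⊤ := by
    rw [← IntermediateField.toSubfield_inj, ← adjoinSF_eq_toSubfield_adjoin, htop,
      IntermediateField.top_toSubfield]
  obtain ⟨u, hu, hind, hutop⟩ := exists_algebraicIndependent_subset_adjoin_eq_top hD hF hNNC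
    (by rintro _ ⟨i, rfl⟩; exact hζ i) htop'
  have huF : ∀ z : u, D z ∈ F := fun z => by
    obtain ⟨i, hi⟩ := hu z.2
    exact hi ▸ hζ i
  refine Set.Subset.antisymm (fun y hy => ?_) fun y hy σ hσ => hσ.1 y hy
  exact hind.mem_of_forall_isDiffAut_apply_eq (by rwa [Subtype.range_coe]) hD hF huF hy
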